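/- The n-variable majority function Maj_n has algebraic immunity exactly ⌈n/2⌉, the maximum possible value. -/

import Mathlib

abbrev BF (n : ℕ) := (Fin n → ZMod 2) → ZMod 2

/-- Hamming weight of a vector in `F₂ⁿ`. -/
def wtv {n : ℕ} (x : Fin n → ZMod 2) : ℕ :=
  (Finset.univ.filter fun i => x i = 1).card

/-- ANF coefficient `a_α = ⊕_{z ≤ α} f(z)`. -/
def anf {n : ℕ} (f : BF n) (α : Fin n → ZMod 2) : ZMod 2 :=
  ∑ z ∈ Finset.univ.filter (fun z : Fin n → ZMod 2 => ∀ i, z i = 1 → α i = 1), f z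

/-- Algebraic degree: the maximum weight of `α` with nonzero ANF coefficient
(0 for the zero function). -/
def degBF {n : ℕ} (f : BF n) : ℕ :=
  (Finset.univ.filter fun α => anf f α ≠ 0).sup wtv

/-- Algebraic immunity: minimum degree of a nonzero annihilator of `f` or of `1 ⊕ f`. -/
noncomputable def AI {n : ℕ} (f : BF n) : ℕ :=
  sInf {d : ℕ | ∃ g : BF n, g ≠ 0 ∧ degBF g = d ∧
    ((∀ x, g x * f x = 0) ∨ (∀ x, g x * (1 + f x) = 0))}

/-- The n-variable majority function: 1 iff the weight exceeds ⌊n/2⌋. -/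
def majF (n : ℕ) : BF n := fun x => if n / 2 < wtv x then 1 else 0

/-!
The ANF transform is an involution of `F₂`-valued functions (Möbius inversion on the Boolean
lattice, where all signs are `+1`). Hence prescribing ANF coefficients on the points of weight
`≤ d` parametrises the functions of degree `≤ d`, a space of dimension larger than `2ⁿ⁻¹` once
`2d ≥ n`; since `f` or `1 + f` has support of size `≤ 2ⁿ⁻¹`, one of them has a nonzero
annihilator of degree `≤ ⌈n/2⌉`. Conversely, a nonzero function vanishing below weight `k` has
degree `≥ k`. An annihilator of `1 + Maj_n` vanishes in weights `≤ ⌊n/2⌋`; an annihilator of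
`Maj_n`, translated by the all-ones vector (which does not raise the degree), vanishes in
weights `< ⌈n/2⌉`.
-/

open Finset

section

variable {n : ℕ}

abbrev SuppLE (x y : Fin n → ZMod 2) : Prop := ∀ i, x i = 1 → y i = 1

local infix:50 " ≼ " => SuppLE

lemma cast_card_filter_forall {ι β R : Type*} [Fintype ι] [DecidableEq ι] [Fintype β]
    [CommSemiring R] (P : ι → β → Prop) (Q : ι → Prop) [∀ i, DecidablePred (P i)]
    [DecidablePred Q] [DecidablePred fun z : ι → β => ∀ i, P i (z i)]
    (h : ∀ i, (#{t | P i t} : R) = if Q i then 1 else 0) :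
    (#{z : ι → β | ∀ i, P i (z i)} : R) = if ∀ i, Q i then 1 else 0 := by
  have hpi : ({z | ∀ i, P i (z i)} : Finset (ι → β)) = Fintype.piFinset fun i => {t | P i t} := by
    ext z
    simp [Fintype.mem_piFinset]
  rw [hpi, Fintype.card_piFinset, Nat.cast_prod, Fintype.prod_congr _ _ h, Fintype.prod_boole]

lemma cast_card_filter_le_le_add (a α β : Fin n → ZMod 2) :
    (#{z | z ≼ β ∧ α ≼ z + a} : ZMod 2) =
      if ∀ i, (β i = 1 → α i = 1) ∧ (α i = 1 → β i = 0 → a i = 1) then 1 else 0 := by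
  have hfilter : univ.filter (fun z : Fin n → ZMod 2 => z ≼ β ∧ α ≼ z + a) =
      univ.filter fun z => ∀ i, (z i = 1 → β i = 1) ∧ (α i = 1 → z i + a i = 1) :=
    filter_congr fun z _ => forall_and.symm
  have hcoord : ∀ b a' c : ZMod 2,
      (#{t : ZMod 2 | (t = 1 → b = 1) ∧ (a' = 1 → t + c = 1)} : ZMod 2) =
        if (b = 1 → a' = 1) ∧ (a' = 1 → b = 0 → c = 1) then 1 else 0 := by decide
  rw [hfilter]
  convert cast_card_filter_forall _ _ fun i => hcoord (β i) (α i) (a i)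

lemma anf_anf_comp_add (c : BF n) (a β : Fin n → ZMod 2) :
    anf (fun x => anf c (x + a)) β = ∑ α, (#{z | z ≼ β ∧ α ≼ z + a} : ZMod 2) * c α := by
  simp only [anf]
  rw [sum_comm' (t' := univ) (s' := fun α => {z | z ≼ β ∧ α ≼ z + a}) (by simp [SuppLE])]
  simp [sum_const, nsmul_eq_mul]

lemma anf_anf (c : BF n) : anf (anf c) = c := by
  funext β
  have hcoord : ∀ a b : ZMod 2, ((b = 1 → a = 1) ∧ (a = 1 → b = 0 → (0 : ZMod 2) = 1)) ↔ a = b := by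
    decide
  have hdiag : ∀ α : Fin n → ZMod 2,
      (∀ i, (β i = 1 → α i = 1) ∧ (α i = 1 → β i = 0 → (0 : Fin n → ZMod 2) i = 1)) ↔ α = β :=
    fun α => (forall_congr' fun i => hcoord (α i) (β i)).trans funext_iff.symm
  calc anf (anf c) β = anf (fun x => anf c (x + 0)) β := by simp only [add_zero]
    _ = ∑ α, (if α = β then 1 else 0) * c α := by
      simp only [anf_anf_comp_add, cast_card_filter_le_le_add, hdiag]
    _ = c β := by simp

lemma degBF_le_iff {f : BF n} {d : ℕ} : degBF f ≤ d ↔ ∀ α, anf f α ≠ 0 → wtv α ≤ d := by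
  simp [degBF, Finset.sup_le_iff]

lemma wtv_le_degBF {f : BF n} {α : Fin n → ZMod 2} (h : anf f α ≠ 0) : wtv α ≤ degBF f :=
  degBF_le_iff.mp le_rfl α h

lemma wtv_mono {x y : Fin n → ZMod 2} (h : x ≼ y) : wtv x ≤ wtv y :=
  card_le_card fun i => by simpa using h i

lemma degBF_comp_add_le (g : BF n) (a : Fin n → ZMod 2) :
    degBF (fun x => g (x + a)) ≤ degBF g := by
  refine degBF_le_iff.mpr fun β hβ => ?_
  rw [← anf_anf g, anf_anf_comp_add] at hβ
  obtain ⟨α, -, hα⟩ := exists_ne_zero_of_sum_ne_zero hβ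
  rw [cast_card_filter_le_le_add] at hα
  by_cases hcond : ∀ i, (β i = 1 → α i = 1) ∧ (α i = 1 → β i = 0 → a i = 1)
  · rw [if_pos hcond, one_mul] at hα
    exact (wtv_mono fun i => (hcond i).1).trans (wtv_le_degBF hα)
  · simp [hcond] at hα

lemma le_degBF_of_eq_zero_of_wtv_lt {g : BF n} {k : ℕ} (hg : g ≠ 0)
    (hvan : ∀ x, wtv x < k → g x = 0) : k ≤ degBF g := by
  by_contra! hdeg
  have hanf : anf g = 0 := by
    funext α
    by_contra hα
    have hαk : wtv α < k := (wtv_le_degBF hα).trans_lt hdeg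
    exact hα (sum_eq_zero fun z hz => hvan z ((wtv_mono (mem_filter.mp hz).2).trans_lt hαk))
  refine hg ?_
  rw [← anf_anf g, hanf]
  funext x
  simp [anf]

def anfₗ : BF n →ₗ[ZMod 2] BF n where
  toFun := anf
  map_add' f g := by funext α; simp [anf, sum_add_distrib]
  map_smul' r f := by funext α; simp [anf, mul_sum]

/-- `g` is `anf` of a coefficient vector supported on `T`; restricting such `g` to `S` is a linear
map into a space of smaller dimension, so it has a nonzero kernel. -/
lemma exists_ne_zero_degBF_le_eq_zero_on (S : Finset (Fin n → ZMod 2)) {d : ℕ}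
    (hS : #S < #{α : Fin n → ZMod 2 | wtv α ≤ d}) :
    ∃ g : BF n, g ≠ 0 ∧ degBF g ≤ d ∧ ∀ x ∈ S, g x = 0 := by
  set T := univ.filter fun α : Fin n → ZMod 2 => wtv α ≤ d
  let φ : (T → ZMod 2) →ₗ[ZMod 2] S → ZMod 2 :=
    LinearMap.funLeft _ _ Subtype.val ∘ₗ anfₗ ∘ₗ Function.ExtendByZero.linearMap _ Subtype.val
  have hker : LinearMap.ker φ ≠ ⊥ := LinearMap.ker_ne_bot_of_finrank_lt (by simpa using hS)
  obtain ⟨c, hc, hc0⟩ := (Submodule.ne_bot_iff _).mp hker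
  set e : BF n := Function.extend Subtype.val c 0
  refine ⟨anf e, fun h => hc0 ?_, degBF_le_iff.mpr fun α hα => ?_, fun x hx => congrFun hc ⟨x, hx⟩⟩
  · funext α
    rw [← Subtype.val_injective.extend_apply c 0 α]
    change e α = 0
    rw [← anf_anf e, h]
    simp [anf]
  · rw [anf_anf] at hα
    by_contra hαT
    exact hα (Function.extend_apply' _ _ _ fun ⟨β, hβ⟩ => hαT (hβ ▸ (mem_filter.mp β.2).2))

lemma wtv_le (x : Fin n → ZMod 2) : wtv x ≤ n :=
  (card_le_univ _).trans_eq (Fintype.card_fin n)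

lemma wtv_add_one (x : Fin n → ZMod 2) : wtv (x + 1) = n - wtv x := by
  have hflip : ∀ t : ZMod 2, t + 1 = 1 ↔ ¬t = 1 := by decide
  have h := card_filter_add_card_filter_not (s := univ) fun i : Fin n => x i = 1
  simp only [card_univ, Fintype.card_fin] at h
  simp only [wtv, Pi.add_apply, Pi.one_apply, hflip]
  omega

lemma add_one_add_one (x : Fin n → ZMod 2) : x + 1 + 1 = x := by
  funext i
  simp only [Pi.add_apply, Pi.one_apply]
  rw [add_assoc, CharTwo.add_self_eq_zero, add_zero]

lemma exists_wtv_eq {k : ℕ} (hk : k ≤ n) : ∃ x : Fin n → ZMod 2, wtv x = k := by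
  obtain ⟨s, -, hs⟩ := exists_subset_card_eq (s := (univ : Finset (Fin n))) (by simpa using hk)
  exact ⟨fun i => if i ∈ s then 1 else 0, by simp [wtv, hs]⟩

/-- `x ↦ x + 1` maps the weights above `d` injectively to weights below `n - d ≤ d`, and misses
a point of weight `n - d`. -/
lemma card_wtv_gt_lt_card_wtv_le {d : ℕ} (hd : n ≤ 2 * d) :
    #{x : Fin n → ZMod 2 | d < wtv x} < #{x : Fin n → ZMod 2 | wtv x ≤ d} := by
  obtain ⟨w, hw⟩ := exists_wtv_eq (Nat.sub_le n d)
  have hwL : w ∈ univ.filter fun x : Fin n → ZMod 2 => wtv x ≤ d := by simp; omega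
  calc #{x : Fin n → ZMod 2 | d < wtv x}
      ≤ #((univ.filter fun x : Fin n → ZMod 2 => wtv x ≤ d).erase w) := by
        refine card_le_card_of_injOn (· + 1) (fun x hx => ?_) (add_left_injective 1).injOn
        have hx' : d < wtv x := (mem_filter.mp hx).2
        have := wtv_le x
        have hx1 := wtv_add_one x
        rw [mem_coe, mem_erase, mem_filter]
        beta_reduce
        exact ⟨fun h => by rw [h] at hx1; omega, mem_univ _, by omega⟩
    _ < _ := card_erase_lt_of_mem hwL

def IsAnnihilator (g f : BF n) : Prop := ∀ x, g x * f x = 0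

lemma isAnnihilator_iff {g f : BF n} : IsAnnihilator g f ↔ ∀ x, f x ≠ 0 → g x = 0 :=
  forall_congr' fun x => by rw [mul_eq_zero]; tauto

lemma AI_le_degBF {f g : BF n} (hg : g ≠ 0) (h : IsAnnihilator g f ∨ IsAnnihilator g (1 + f)) :
    AI f ≤ degBF g :=
  Nat.sInf_le ⟨g, hg, rfl, h⟩

lemma exists_isAnnihilator_degBF_le (f : BF n) {d : ℕ} (hd : n ≤ 2 * d) :
    ∃ g : BF n, g ≠ 0 ∧ degBF g ≤ d ∧ (IsAnnihilator g f ∨ IsAnnihilator g (1 + f)) := by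
  have hf := card_filter_add_card_filter_not (s := univ) fun x => f x = 0
  have hwt := card_filter_add_card_filter_not (s := univ) fun x : Fin n → ZMod 2 => wtv x ≤ d
  have hlt := card_wtv_gt_lt_card_wtv_le hd
  simp only [not_le] at hwt
  have hone_add : ∀ t : ZMod 2, 1 + t ≠ 0 ↔ t = 0 := by decide
  by_cases h : #{x | ¬f x = 0} < #{x : Fin n → ZMod 2 | wtv x ≤ d}
  · obtain ⟨g, hg, hdeg, hvan⟩ := exists_ne_zero_degBF_le_eq_zero_on _ h
    exact ⟨g, hg, hdeg, Or.inl (isAnnihilator_iff.mpr fun x hx => hvan x (by simpa using hx))⟩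
  · obtain ⟨g, hg, hdeg, hvan⟩ :=
      exists_ne_zero_degBF_le_eq_zero_on {x | f x = 0} (d := d) (by omega)
    refine ⟨g, hg, hdeg, Or.inr (isAnnihilator_iff.mpr fun x hx => hvan x ?_)⟩
    simpa [hone_add] using hx

lemma AI_le (f : BF n) {d : ℕ} (hd : n ≤ 2 * d) : AI f ≤ d :=
  let ⟨_, hg, hdeg, h⟩ := exists_isAnnihilator_degBF_le f hd
  (AI_le_degBF hg h).trans hdeg

lemma le_AI {f : BF n} {k : ℕ}
    (h : ∀ g, g ≠ 0 → IsAnnihilator g f ∨ IsAnnihilator g (1 + f) → k ≤ degBF g) : k ≤ AI f := by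
  obtain ⟨g, hg, -, hann⟩ := exists_isAnnihilator_degBF_le f (d := n) (by omega)
  exact le_csInf ⟨_, g, hg, rfl, hann⟩ fun m ⟨g, hg, hm, hann⟩ => hm ▸ h g hg hann

lemma majF_ne_zero_iff {x : Fin n → ZMod 2} : majF n x ≠ 0 ↔ n / 2 < wtv x := by
  unfold majF
  split_ifs with h <;> simp [h]

lemma one_add_majF_ne_zero_iff {x : Fin n → ZMod 2} : (1 + majF n) x ≠ 0 ↔ wtv x ≤ n / 2 := by
  simp only [Pi.add_apply, Pi.one_apply, majF]
  split_ifs with h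
  · simp only [not_le.mpr h, iff_false, not_not]; decide
  · simp [not_lt.mp h]

lemma le_degBF_of_isAnnihilator_majF {g : BF n} (hg : g ≠ 0)
    (h : IsAnnihilator g (majF n) ∨ IsAnnihilator g (1 + majF n)) : (n + 1) / 2 ≤ degBF g := by
  rcases h with h | h
  · -- `g` vanishes in weights `> n / 2`, so `x ↦ g (x + 1)` vanishes in weights `< (n + 1) / 2`.
    have hg' : (fun x => g (x + 1)) ≠ 0 := fun h0 =>
      hg (funext fun x => by simpa [add_one_add_one] using congrFun h0 (x + 1))
    refine (le_degBF_of_eq_zero_of_wtv_lt hg' fun x hx => isAnnihilator_iff.mp h _ ?_).trans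
      (degBF_comp_add_le g 1)
    have := wtv_le x
    rw [majF_ne_zero_iff, wtv_add_one]
    omega
  · exact le_trans (by omega) (le_degBF_of_eq_zero_of_wtv_lt (k := n / 2 + 1) hg fun x hx =>
      isAnnihilator_iff.mp h x (one_add_majF_ne_zero_iff.mpr (by omega)))

end

theorem AI_maj_general (n : ℕ) :
    AI (majF n) = (n + 1) / 2 ∧ ∀ f : BF n, AI f ≤ (n + 1) / 2 := by
  have hupper : ∀ f : BF n, AI f ≤ (n + 1) / 2 := fun f => AI_le f (by omega)
  exact ⟨le_antisymm (hupper _) (le_AI fun _ => le_degBF_of_isAnnihilator_majF), hupper⟩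

/-- Maj_n has algebraic immunity exactly ⌈n/2⌉, the maximum possible value. -/
theorem AI_maj (n : ℕ) (hn : 1 ≤ n) :
    AI (majF n) = (n + 1) / 2 ∧ ∀ f : BF n, AI f ≤ (n + 1) / 2 :=
  AI_maj_general n
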